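/- Let Ω₀ ∈ ℝ^{pM×pM} be symmetric positive definite with C_Σ = ‖Ω₀^{-1}‖_∞^(M), let d ≥ 1 be an integer, and let Δ ∈ ℝ^{pM×pM} be a symmetric block matrix such that for every row index j, at most d of the blocks Δ_jl (1 ≤ l ≤ p) are nonzero, and suppose ‖Δ‖_max^(M) < 1/(3 C_Σ d). Then Ω₀ + Δ is invertible, and the remainder R(Δ) = (Ω₀ + Δ)^{-1} − Ω₀^{-1} + Ω₀^{-1} Δ Ω₀^{-1} satisfies R(Δ) = Ω₀^{-1} Δ Ω₀^{-1} Δ J Ω₀^{-1}, where J = Σ_{s=0}^∞ (−1)^s (Ω₀^{-1} Δ)^s, and moreover ‖R(Δ)‖_max^(M) ≤ (3/2) C_Σ³ d (‖Δ‖_max^(M))². -/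

import Mathlib

open scoped BigOperators
open Matrix

noncomputable section

namespace JF

/-- Frobenius norm of a real matrix. -/
def frobG {α β : Type*} [Fintype α] [Fintype β] (B : Matrix α β ℝ) : ℝ :=
  Real.sqrt (∑ a, ∑ b, B a b ^ 2)

/-- The `(j,l)` block (an `M × M` matrix) of a `pM × pM` matrix. -/
def blk {p M : ℕ} (A : Matrix (Fin p × Fin M) (Fin p × Fin M) ℝ) (j l : Fin p) :
    Matrix (Fin M) (Fin M) ℝ := fun a b => A (j, a) (l, b)

/-- `M`-block version of the ℓ∞ matrix norm: `max_j Σ_l ‖A_{jl}‖_F`. -/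
def blockInfty {p M : ℕ} (A : Matrix (Fin p × Fin M) (Fin p × Fin M) ℝ) : ℝ :=
  ⨆ j, ∑ l, frobG (blk A j l)

/-- `M`-block version of the max (elementwise ℓ∞) norm: `max_{j,l} ‖A_{jl}‖_F`. -/
def blockMax {p M : ℕ} (A : Matrix (Fin p × Fin M) (Fin p × Fin M) ℝ) : ℝ :=
  ⨆ j, ⨆ l, frobG (blk A j l)

/-- `M`-block version of the ℓ₁ matrix norm: `max_l Σ_j ‖A_{jl}‖_F`. -/
def blockOne {p M : ℕ} (A : Matrix (Fin p × Fin M) (Fin p × Fin M) ℝ) : ℝ :=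
  ⨆ l, ∑ j, frobG (blk A j l)

/-- Generalized block ℓ∞ norm, with block-rows/columns indexed by an arbitrary
finite type `ι` and blocks of shape `α × α`. -/
def bInftyG {ι α : Type*} [Fintype ι] [Fintype α] (A : Matrix (ι × α) (ι × α) ℝ) : ℝ :=
  ⨆ j, ∑ l, frobG (fun a b => A (j, a) (l, b))

/-- Entrywise ℓ₁ norm of a matrix. -/
def ell1 {α β : Type*} [Fintype α] [Fintype β] (A : Matrix α β ℝ) : ℝ :=
  ∑ i, ∑ j, |A i j|

/-- `j`-th block of a vector in `ℝ^{pM}`. -/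
def vblk {p M : ℕ} (u : Fin p × Fin M → ℝ) (j : Fin p) : Fin M → ℝ := fun a => u (j, a)

/-- Euclidean norm of a vector. -/
def vnorm2 {M : ℕ} (v : Fin M → ℝ) : ℝ := Real.sqrt (∑ a, v a ^ 2)

/-- Block max norm of a vector in `ℝ^{pM}`: `max_j ‖u_j‖_2`. -/
def vBlockMax {p M : ℕ} (u : Fin p × Fin M → ℝ) : ℝ := ⨆ j, vnorm2 (vblk u j)

/-- `j`-th block of a `pM × M` vertically stacked block matrix. -/
def sblk {p M : ℕ} (x : Matrix (Fin p × Fin M) (Fin M) ℝ) (j : Fin p) :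
    Matrix (Fin M) (Fin M) ℝ := fun a b => x (j, a) b

/-- `max_j ‖x_j‖_F` for a `pM × M` stacked block matrix. -/
def stackMax {p M : ℕ} (x : Matrix (Fin p × Fin M) (Fin M) ℝ) : ℝ :=
  ⨆ j, frobG (sblk x j)

/-- `Σ_j ‖x_j‖_F` for a `pM × M` stacked block matrix. -/
def stackOne {p M : ℕ} (x : Matrix (Fin p × Fin M) (Fin M) ℝ) : ℝ :=
  ∑ j, frobG (sblk x j)

/-- The block matrix `Ω` with blocks `Ω_{jl} = θ_{jl} Γ_{jl}`. -/
def mkOmega {p M : ℕ} (Θ : Matrix (Fin p) (Fin p) ℝ)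
    (G : Matrix (Fin p × Fin M) (Fin p × Fin M) ℝ) :
    Matrix (Fin p × Fin M) (Fin p × Fin M) ℝ :=
  fun x y => Θ x.1 y.1 * G x y

/-- Feasible parameters `(Θ, Γ)` for the joint functional graphical model:
`Θ` symmetric with nonnegative off-diagonal and positive diagonal entries,
each `Γ^{(k)}` block-symmetric (`Γ_{lj} = Γ_{jl}ᵀ`), and every
`Ω^{(k)} = (θ_{jl} Γ^{(k)}_{jl})` symmetric positive definite. -/
def Feasible {p M K : ℕ} (Θ : Matrix (Fin p) (Fin p) ℝ)
    (Γ : Fin K → Matrix (Fin p × Fin M) (Fin p × Fin M) ℝ) : Prop :=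
  Θ.IsSymm ∧ (∀ j l : Fin p, j ≠ l → 0 ≤ Θ j l) ∧ (∀ j : Fin p, 0 < Θ j j) ∧
    (∀ (k : Fin K) (j l : Fin p), blk (Γ k) l j = (blk (Γ k) j l)ᵀ) ∧
    (∀ k : Fin K, (mkOmega Θ (Γ k)).PosDef)

/-- The negative log-likelihood part `Σ_k [tr(Σ̂^{(k)} Ω^{(k)}) − log det Ω^{(k)}]`. -/
def loss {p M K : ℕ}
    (Sig Ω : Fin K → Matrix (Fin p × Fin M) (Fin p × Fin M) ℝ) : ℝ :=
  ∑ k, (Matrix.trace (Sig k * Ω k) - Real.log (Ω k).det)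

/-- `Σ_{j≠l} θ_{jl}`. -/
def pen1 {p : ℕ} (Θ : Matrix (Fin p) (Fin p) ℝ) : ℝ :=
  ∑ q ∈ (Finset.univ : Finset (Fin p)).offDiag, Θ q.1 q.2

/-- `Σ_{j≠l} Σ_k ‖Γ^{(k)}_{jl}‖_F`. -/
def pen2 {p M K : ℕ} (Γ : Fin K → Matrix (Fin p × Fin M) (Fin p × Fin M) ℝ) : ℝ :=
  ∑ q ∈ (Finset.univ : Finset (Fin p)).offDiag, ∑ k, frobG (blk (Γ k) q.1 q.2)

/-- The objective `Q₁(λ₁, λ₂, Θ, Γ)`. -/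
def Q1 {p M K : ℕ} (Sig : Fin K → Matrix (Fin p × Fin M) (Fin p × Fin M) ℝ)
    (l1 l2 : ℝ) (Θ : Matrix (Fin p) (Fin p) ℝ)
    (Γ : Fin K → Matrix (Fin p × Fin M) (Fin p × Fin M) ℝ) : ℝ :=
  loss Sig (fun k => mkOmega Θ (Γ k)) + l1 * pen1 Θ + l2 * pen2 Γ

/-- The objective `Q₂(λ, Θ, Γ)`. -/
def Q2 {p M K : ℕ} (Sig : Fin K → Matrix (Fin p × Fin M) (Fin p × Fin M) ℝ)
    (lam : ℝ) (Θ : Matrix (Fin p) (Fin p) ℝ)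
    (Γ : Fin K → Matrix (Fin p × Fin M) (Fin p × Fin M) ℝ) : ℝ :=
  loss Sig (fun k => mkOmega Θ (Γ k)) + pen1 Θ + lam * pen2 Γ

/-- The objective `Q₃(λ, Ω)`. -/
def Q3 {p M K : ℕ} (Sig : Fin K → Matrix (Fin p × Fin M) (Fin p × Fin M) ℝ)
    (lam : ℝ) (Ω : Fin K → Matrix (Fin p × Fin M) (Fin p × Fin M) ℝ) : ℝ :=
  loss Sig Ω + lam * ∑ q ∈ (Finset.univ : Finset (Fin p)).offDiag,
    Real.sqrt (∑ k, frobG (blk (Ω k) q.1 q.2))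

/-- The ℓ₁ distance `‖Θ − Θ'‖₁ + Σ_k ‖Γ^{(k)} − Γ'^{(k)}‖₁` between parameter pairs. -/
def paramDist {p M K : ℕ} (Θ Θ' : Matrix (Fin p) (Fin p) ℝ)
    (Γ Γ' : Fin K → Matrix (Fin p × Fin M) (Fin p × Fin M) ℝ) : ℝ :=
  ell1 (Θ - Θ') + ∑ k, ell1 (Γ k - Γ' k)

/-- `(Θ̂, Γ̂)` is a local minimizer of `Q₁(λ₁, λ₂, ·, ·)` (parameters restricted to
`θ_{jj} = 1`). -/
def IsLocalMinQ1 {p M K : ℕ}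
    (Sig : Fin K → Matrix (Fin p × Fin M) (Fin p × Fin M) ℝ)
    (l1 l2 : ℝ) (Θh : Matrix (Fin p) (Fin p) ℝ)
    (Γh : Fin K → Matrix (Fin p × Fin M) (Fin p × Fin M) ℝ) : Prop :=
  (Feasible Θh Γh ∧ ∀ j, Θh j j = 1) ∧
    ∃ δ > 0, ∀ Θ Γ, Feasible Θ Γ → (∀ j, Θ j j = 1) →
      paramDist Θ Θh Γ Γh < δ → Q1 Sig l1 l2 Θh Γh ≤ Q1 Sig l1 l2 Θ Γ

/-- `(Θ̂, Γ̂)` is a local minimizer of `Q₂(λ, ·, ·)` over the full parameter space. -/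
def IsLocalMinQ2 {p M K : ℕ}
    (Sig : Fin K → Matrix (Fin p × Fin M) (Fin p × Fin M) ℝ)
    (lam : ℝ) (Θh : Matrix (Fin p) (Fin p) ℝ)
    (Γh : Fin K → Matrix (Fin p × Fin M) (Fin p × Fin M) ℝ) : Prop :=
  Feasible Θh Γh ∧
    ∃ δ > 0, ∀ Θ Γ, Feasible Θ Γ →
      paramDist Θ Θh Γ Γh < δ → Q2 Sig lam Θh Γh ≤ Q2 Sig lam Θ Γ

/-- `Ω̂` is a local minimizer of `Q₃(λ, ·)` over `K`-tuples of symmetric positive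
definite matrices. -/
def IsLocalMinQ3 {p M K : ℕ}
    (Sig : Fin K → Matrix (Fin p × Fin M) (Fin p × Fin M) ℝ)
    (lam : ℝ) (Ωh : Fin K → Matrix (Fin p × Fin M) (Fin p × Fin M) ℝ) : Prop :=
  (∀ k, (Ωh k).PosDef) ∧
    ∃ δ > 0, ∀ Ω : Fin K → Matrix (Fin p × Fin M) (Fin p × Fin M) ℝ,
      (∀ k, (Ω k).PosDef) →
      (∑ k, ell1 (Ω k - Ωh k)) < δ → Q3 Sig lam Ωh ≤ Q3 Sig lam Ω


/-!
Write `X = Ω₀⁻¹ Δ`. Row sparsity and symmetry of `Δ` give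
`‖Δ‖_∞^(M), ‖Δ‖_1^(M) ≤ d ‖Δ‖_max^(M)`, and the block norms are submultiplicative, so (as `Ω₀⁻¹`
is symmetric too) `X` has block `ℓ∞`- and `ℓ₁`-norm at most `r = C_Σ d ‖Δ‖_max^(M) < 1/3`.
The Neumann series `J = Σ (-X)^s` therefore converges and inverts `1 + X`, whence
`(Ω₀ + Δ)⁻¹ = J Ω₀⁻¹ =: G` and `R(Δ) = X X G`. Finally `G + X G = Ω₀⁻¹` gives
`‖G‖_1^(M) ≤ C_Σ / (1 - r) ≤ 3 C_Σ / 2`, and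
`‖X X G‖_max^(M) ≤ ‖X‖_max^(M) ‖X‖_1^(M) ‖G‖_1^(M) ≤ (C_Σ ‖Δ‖_max^(M)) · r · (3 C_Σ / 2)`.
-/

open Finset

section Frobenius

attribute [local instance] Matrix.frobeniusNormedAddCommGroup

variable {α β γ : Type*} [Fintype α] [Fintype β] [Fintype γ]

lemma frobG_eq_norm (B : Matrix α β ℝ) : frobG B = ‖B‖ := by
  rw [Matrix.frobenius_norm_def, frobG, Real.sqrt_eq_rpow]
  congr 1
  refine sum_congr rfl fun a _ => sum_congr rfl fun b _ => ?_
  rw [Real.rpow_two, Real.norm_eq_abs, sq_abs]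

lemma frobG_nonneg (B : Matrix α β ℝ) : 0 ≤ frobG B := Real.sqrt_nonneg _

lemma frobG_zero : frobG (0 : Matrix α β ℝ) = 0 := by
  rw [frobG_eq_norm, norm_zero]

lemma frobG_neg (B : Matrix α β ℝ) : frobG (-B) = frobG B := by
  simp only [frobG_eq_norm, norm_neg]

lemma frobG_sub_le (A B : Matrix α β ℝ) : frobG (A - B) ≤ frobG A + frobG B := by
  simp only [frobG_eq_norm]; exact norm_sub_le A B

lemma frobG_transpose (B : Matrix α β ℝ) : frobG Bᵀ = frobG B := by
  simp only [frobG_eq_norm, Matrix.frobenius_norm_transpose]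

lemma frobG_sum_le {ι : Type*} (s : Finset ι) (f : ι → Matrix α β ℝ) :
    frobG (∑ i ∈ s, f i) ≤ ∑ i ∈ s, frobG (f i) := by
  simp only [frobG_eq_norm]; exact norm_sum_le s f

lemma frobG_mul_le (A : Matrix α β ℝ) (B : Matrix β γ ℝ) :
    frobG (A * B) ≤ frobG A * frobG B := by
  simp only [frobG_eq_norm]; exact Matrix.frobenius_norm_mul A B

lemma abs_apply_le_frobG (B : Matrix α β ℝ) (a : α) (b : β) : |B a b| ≤ frobG B := by
  rw [← Real.sqrt_sq_eq_abs, frobG]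
  refine Real.sqrt_le_sqrt ?_
  calc B a b ^ 2 ≤ ∑ b', B a b' ^ 2 :=
        single_le_sum (fun _ _ => sq_nonneg _) (mem_univ b)
    _ ≤ ∑ a', ∑ b', B a' b' ^ 2 :=
        single_le_sum (f := fun a' => ∑ b', B a' b' ^ 2)
          (fun _ _ => sum_nonneg fun _ _ => sq_nonneg _) (mem_univ a)

end Frobenius

section BlockNorms

variable {p M : ℕ}

local notation "𝕄" => Matrix (Fin p × Fin M) (Fin p × Fin M) ℝ

lemma blk_mul (A B : 𝕄) (j l : Fin p) : blk (A * B) j l = ∑ m, blk A j m * blk B m l := by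
  ext a b
  simp only [blk, Matrix.mul_apply, Matrix.sum_apply]
  exact Fintype.sum_prod_type _

lemma row_sum_le_blockInfty (A : 𝕄) (j : Fin p) : ∑ l, frobG (blk A j l) ≤ blockInfty A :=
  le_ciSup (f := fun j => ∑ l, frobG (blk A j l)) (Set.finite_range _).bddAbove j

lemma col_sum_le_blockOne (A : 𝕄) (l : Fin p) : ∑ j, frobG (blk A j l) ≤ blockOne A :=
  le_ciSup (f := fun l => ∑ j, frobG (blk A j l)) (Set.finite_range _).bddAbove l

lemma frobG_blk_le_blockMax (A : 𝕄) (j l : Fin p) : frobG (blk A j l) ≤ blockMax A :=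
  (le_ciSup (Set.finite_range _).bddAbove l).trans
    (le_ciSup (f := fun j => ⨆ l, frobG (blk A j l)) (Set.finite_range _).bddAbove j)

lemma blockInfty_le {A : 𝕄} {c : ℝ} (h : ∀ j, ∑ l, frobG (blk A j l) ≤ c) (hc : 0 ≤ c) :
    blockInfty A ≤ c :=
  Real.iSup_le h hc

lemma blockOne_le {A : 𝕄} {c : ℝ} (h : ∀ l, ∑ j, frobG (blk A j l) ≤ c) (hc : 0 ≤ c) :
    blockOne A ≤ c :=
  Real.iSup_le h hc

lemma blockMax_le {A : 𝕄} {c : ℝ} (h : ∀ j l, frobG (blk A j l) ≤ c) (hc : 0 ≤ c) :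
    blockMax A ≤ c :=
  Real.iSup_le (fun j => Real.iSup_le (h j) hc) hc

lemma blockInfty_nonneg (A : 𝕄) : 0 ≤ blockInfty A :=
  Real.iSup_nonneg fun _ => sum_nonneg fun _ _ => frobG_nonneg _

lemma blockOne_nonneg (A : 𝕄) : 0 ≤ blockOne A :=
  Real.iSup_nonneg fun _ => sum_nonneg fun _ _ => frobG_nonneg _

lemma blockMax_nonneg (A : 𝕄) : 0 ≤ blockMax A :=
  Real.iSup_nonneg fun _ => Real.iSup_nonneg fun _ => frobG_nonneg _

lemma abs_apply_le_blockInfty (A : 𝕄) (x y : Fin p × Fin M) : |A x y| ≤ blockInfty A :=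
  calc |A x y| ≤ frobG (blk A x.1 y.1) := abs_apply_le_frobG (blk A x.1 y.1) x.2 y.2
    _ ≤ ∑ l, frobG (blk A x.1 l) :=
        single_le_sum (f := fun l => frobG (blk A x.1 l)) (fun _ _ => frobG_nonneg _)
          (mem_univ y.1)
    _ ≤ blockInfty A := row_sum_le_blockInfty A x.1

lemma blockOne_eq_blockInfty_of_isSymm {A : 𝕄} (hA : A.IsSymm) : blockOne A = blockInfty A := by
  unfold blockOne blockInfty
  congr 1
  funext l
  refine sum_congr rfl fun j _ => ?_
  conv_lhs => rw [← hA.eq]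
  exact frobG_transpose (blk A l j)

lemma blockInfty_neg (A : 𝕄) : blockInfty (-A) = blockInfty A := by
  unfold blockInfty
  congr 1
  funext j
  exact sum_congr rfl fun l _ => frobG_neg (blk A j l)

lemma blockOne_sub_le (A B : 𝕄) : blockOne (A - B) ≤ blockOne A + blockOne B := by
  refine blockOne_le (fun l => ?_) (add_nonneg (blockOne_nonneg A) (blockOne_nonneg B))
  calc ∑ j, frobG (blk (A - B) j l) ≤ ∑ j, (frobG (blk A j l) + frobG (blk B j l)) :=
        sum_le_sum fun j _ => frobG_sub_le (blk A j l) (blk B j l)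
    _ ≤ blockOne A + blockOne B := by
        rw [sum_add_distrib]
        exact add_le_add (col_sum_le_blockOne A l) (col_sum_le_blockOne B l)

lemma frobG_blk_mul_le (A B : 𝕄) (j l : Fin p) :
    frobG (blk (A * B) j l) ≤ ∑ m, frobG (blk A j m) * frobG (blk B m l) := by
  rw [blk_mul]
  exact (frobG_sum_le _ _).trans (sum_le_sum fun m _ => frobG_mul_le _ _)

lemma blockInfty_mul_le (A B : 𝕄) : blockInfty (A * B) ≤ blockInfty A * blockInfty B := by
  refine blockInfty_le (fun j => ?_) (mul_nonneg (blockInfty_nonneg A) (blockInfty_nonneg B))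
  calc ∑ l, frobG (blk (A * B) j l)
      ≤ ∑ l, ∑ m, frobG (blk A j m) * frobG (blk B m l) :=
        sum_le_sum fun l _ => frobG_blk_mul_le A B j l
    _ = ∑ m, frobG (blk A j m) * ∑ l, frobG (blk B m l) := by
        rw [sum_comm]; simp only [mul_sum]
    _ ≤ ∑ m, frobG (blk A j m) * blockInfty B :=
        sum_le_sum fun m _ =>
          mul_le_mul_of_nonneg_left (row_sum_le_blockInfty B m) (frobG_nonneg _)
    _ ≤ blockInfty A * blockInfty B := by
        rw [← sum_mul]
        exact mul_le_mul_of_nonneg_right (row_sum_le_blockInfty A j) (blockInfty_nonneg B)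

lemma blockOne_mul_le (A B : 𝕄) : blockOne (A * B) ≤ blockOne A * blockOne B := by
  refine blockOne_le (fun l => ?_) (mul_nonneg (blockOne_nonneg A) (blockOne_nonneg B))
  calc ∑ j, frobG (blk (A * B) j l)
      ≤ ∑ j, ∑ m, frobG (blk A j m) * frobG (blk B m l) :=
        sum_le_sum fun j _ => frobG_blk_mul_le A B j l
    _ = ∑ m, (∑ j, frobG (blk A j m)) * frobG (blk B m l) := by
        rw [sum_comm]; simp only [sum_mul]
    _ ≤ ∑ m, blockOne A * frobG (blk B m l) :=
        sum_le_sum fun m _ =>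
          mul_le_mul_of_nonneg_right (col_sum_le_blockOne A m) (frobG_nonneg _)
    _ ≤ blockOne A * blockOne B := by
        rw [← mul_sum]
        exact mul_le_mul_of_nonneg_left (col_sum_le_blockOne B l) (blockOne_nonneg A)

lemma blockMax_mul_le_blockInfty_mul (A B : 𝕄) :
    blockMax (A * B) ≤ blockInfty A * blockMax B := by
  refine blockMax_le (fun j l => ?_) (mul_nonneg (blockInfty_nonneg A) (blockMax_nonneg B))
  calc frobG (blk (A * B) j l)
      ≤ ∑ m, frobG (blk A j m) * frobG (blk B m l) := frobG_blk_mul_le A B j l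
    _ ≤ ∑ m, frobG (blk A j m) * blockMax B :=
        sum_le_sum fun m _ =>
          mul_le_mul_of_nonneg_left (frobG_blk_le_blockMax B m l) (frobG_nonneg _)
    _ ≤ blockInfty A * blockMax B := by
        rw [← sum_mul]
        exact mul_le_mul_of_nonneg_right (row_sum_le_blockInfty A j) (blockMax_nonneg B)

lemma blockMax_mul_le_mul_blockOne (A B : 𝕄) :
    blockMax (A * B) ≤ blockMax A * blockOne B := by
  refine blockMax_le (fun j l => ?_) (mul_nonneg (blockMax_nonneg A) (blockOne_nonneg B))
  calc frobG (blk (A * B) j l)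
      ≤ ∑ m, frobG (blk A j m) * frobG (blk B m l) := frobG_blk_mul_le A B j l
    _ ≤ ∑ m, blockMax A * frobG (blk B m l) :=
        sum_le_sum fun m _ =>
          mul_le_mul_of_nonneg_right (frobG_blk_le_blockMax A j m) (frobG_nonneg _)
    _ ≤ blockMax A * blockOne B := by
        rw [← mul_sum]
        exact mul_le_mul_of_nonneg_left (col_sum_le_blockOne B l) (blockMax_nonneg A)

lemma blockInfty_pow_le (A : 𝕄) (s : ℕ) :
    blockInfty (A ^ s) ≤ blockInfty (1 : 𝕄) * blockInfty A ^ s := by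
  induction s with
  | zero => simp
  | succ s ih =>
    rw [pow_succ, pow_succ, ← mul_assoc]
    exact (blockInfty_mul_le _ _).trans
      (mul_le_mul_of_nonneg_right ih (blockInfty_nonneg A))

lemma blockInfty_le_of_sparse {A : 𝕄} {d : ℕ}
    (hA : ∀ j : Fin p, {l : Fin p | blk A j l ≠ 0}.ncard ≤ d) :
    blockInfty A ≤ d * blockMax A := by
  classical
  refine blockInfty_le (fun j => ?_) (by positivity [blockMax_nonneg A])
  set S := univ.filter fun l => blk A j l ≠ 0
  have hS : (S.card : ℝ) ≤ d := by
    have hSj : (S : Set (Fin p)) = {l | blk A j l ≠ 0} := by ext; simp [S]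
    exact_mod_cast (Set.ncard_coe_finset S).symm.trans_le (hSj ▸ hA j)
  calc ∑ l, frobG (blk A j l) = ∑ l ∈ S, frobG (blk A j l) := by
        refine (sum_subset (subset_univ S) fun l _ hl => ?_).symm
        simp only [S, mem_filter, mem_univ, true_and, not_not] at hl
        rw [hl, frobG_zero]
    _ ≤ S.card * blockMax A := by
        rw [← nsmul_eq_mul]
        exact sum_le_card_nsmul _ _ _ fun l _ => frobG_blk_le_blockMax A j l
    _ ≤ d * blockMax A := mul_le_mul_of_nonneg_right hS (blockMax_nonneg A)

lemma blockInfty_mul_le_of_sparse (B : 𝕄) {Δ : 𝕄} {d : ℕ}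
    (hΔ : ∀ j : Fin p, {l : Fin p | blk Δ j l ≠ 0}.ncard ≤ d) :
    blockInfty (B * Δ) ≤ blockInfty B * (d * blockMax Δ) :=
  (blockInfty_mul_le B Δ).trans
    (mul_le_mul_of_nonneg_left (blockInfty_le_of_sparse hΔ) (blockInfty_nonneg B))

lemma blockOne_mul_le_of_sparse {B Δ : 𝕄} {d : ℕ} (hB : B.IsSymm) (hΔs : Δ.IsSymm)
    (hΔ : ∀ j : Fin p, {l : Fin p | blk Δ j l ≠ 0}.ncard ≤ d) :
    blockOne (B * Δ) ≤ blockInfty B * (d * blockMax Δ) := by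
  refine (blockOne_mul_le B Δ).trans ?_
  rw [blockOne_eq_blockInfty_of_isSymm hB, blockOne_eq_blockInfty_of_isSymm hΔs]
  exact mul_le_mul_of_nonneg_left (blockInfty_le_of_sparse hΔ) (blockInfty_nonneg B)

lemma blockMax_mul_mul_le (X Y G : 𝕄) :
    blockMax (X * (Y * G)) ≤ blockMax X * (blockOne Y * blockOne G) :=
  (blockMax_mul_le_mul_blockOne _ _).trans
    (mul_le_mul_of_nonneg_left (blockOne_mul_le Y G) (blockMax_nonneg X))

lemma summable_pow_of_blockInfty_lt_one {A : 𝕄} (hA : blockInfty A < 1) :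
    Summable fun s : ℕ => A ^ s := by
  have hgeom : Summable fun s : ℕ => blockInfty (1 : 𝕄) * blockInfty A ^ s :=
    (summable_geometric_of_lt_one (blockInfty_nonneg A) hA).mul_left _
  refine Pi.summable.mpr fun x => Pi.summable.mpr fun y => hgeom.of_norm_bounded fun s => ?_
  rw [Real.norm_eq_abs]
  exact (abs_apply_le_blockInfty _ x y).trans (blockInfty_pow_le A s)

lemma exists_hasSum_neg_pow_one_add_mul_eq_one {X : 𝕄} (hX : blockInfty X < 1) :
    ∃ J, HasSum (fun s : ℕ => (-X) ^ s) J ∧ (1 + X) * J = 1 := by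
  have hsum := summable_pow_of_blockInfty_lt_one ((blockInfty_neg X).trans_lt hX)
  exact ⟨_, hsum.hasSum, by simpa using hsum.one_sub_mul_tsum_pow⟩

lemma blockOne_le_of_one_add_mul_eq {X G B : 𝕄} {r : ℝ} (h : (1 + X) * G = B)
    (hX : blockOne X ≤ r) (hr : r < 1) : blockOne G ≤ blockOne B / (1 - r) := by
  have hG : G = B - X * G := eq_sub_of_add_eq (by rwa [add_mul, one_mul] at h)
  have hrec : blockOne G ≤ blockOne B + r * blockOne G :=
    calc blockOne G = blockOne (B - X * G) := congrArg blockOne hG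
      _ ≤ blockOne B + blockOne X * blockOne G :=
          (blockOne_sub_le _ _).trans (add_le_add_right (blockOne_mul_le X G) _)
      _ ≤ blockOne B + r * blockOne G := by gcongr; exact blockOne_nonneg G
  rw [le_div_iff₀ (sub_pos.mpr hr)]
  linarith

end BlockNorms

section Inverse

variable {n K : Type*} [Fintype n] [DecidableEq n] [CommRing K] {Ω Δ J : Matrix n n K}

lemma add_mul_mul_inv_eq_one (hΩ : IsUnit Ω.det) (h : (1 + Ω⁻¹ * Δ) * J = 1) :
    (Ω + Δ) * (J * Ω⁻¹) = 1 := by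
  have hΩΩ : Ω * Ω⁻¹ = 1 := Matrix.mul_nonsing_inv Ω hΩ
  calc (Ω + Δ) * (J * Ω⁻¹) = Ω * (1 + Ω⁻¹ * Δ) * J * Ω⁻¹ := by
        rw [mul_add Ω, mul_one, ← mul_assoc Ω Ω⁻¹, hΩΩ, one_mul, mul_assoc]
    _ = Ω * ((1 + Ω⁻¹ * Δ) * J) * Ω⁻¹ := by rw [mul_assoc Ω]
    _ = 1 := by rw [h, mul_one, hΩΩ]

lemma inv_add_sub_inv_add_inv_mul_mul_inv (hΩ : IsUnit Ω.det) (h : (1 + Ω⁻¹ * Δ) * J = 1) :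
    (Ω + Δ)⁻¹ - Ω⁻¹ + Ω⁻¹ * Δ * Ω⁻¹ = Ω⁻¹ * Δ * Ω⁻¹ * Δ * J * Ω⁻¹ := by
  have hJ : J = 1 - Ω⁻¹ * Δ + Ω⁻¹ * Δ * (Ω⁻¹ * Δ) * J := by
    have key : (1 - Ω⁻¹ * Δ) * ((1 + Ω⁻¹ * Δ) * J - 1)
        = J - (1 - Ω⁻¹ * Δ + Ω⁻¹ * Δ * (Ω⁻¹ * Δ) * J) := by noncomm_ring
    rw [h, sub_self, mul_zero] at key
    exact sub_eq_zero.mp key.symm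
  rw [Matrix.inv_eq_right_inv (add_mul_mul_inv_eq_one hΩ h)]
  nth_rw 1 [hJ]
  noncomm_ring

end Inverse

lemma mul_mul_lt_one_third {C d ε : ℝ} (hε : 0 ≤ ε) (h : ε < 1 / (3 * C * d)) :
    C * (d * ε) < 1 / 3 := by
  have hCd : 0 < 3 * C * d := by
    by_contra! hCd
    exact (h.trans_le (one_div_nonpos.mpr hCd)).not_ge hε
  have := (lt_div_iff₀ hCd).mp h
  linarith

theorem statement_18_general {p M : ℕ}
    (Ω₀ : Matrix (Fin p × Fin M) (Fin p × Fin M) ℝ) (hΩ₀ : Ω₀.PosDef)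
    (d : ℕ)
    (Δ : Matrix (Fin p × Fin M) (Fin p × Fin M) ℝ) (hΔs : Δ.IsSymm)
    (hΔd : ∀ j : Fin p, {l : Fin p | blk Δ j l ≠ 0}.ncard ≤ d)
    (hsmall : blockMax Δ < 1 / (3 * blockInfty Ω₀⁻¹ * d)) :
    IsUnit (Ω₀ + Δ) ∧
    ∃ J : Matrix (Fin p × Fin M) (Fin p × Fin M) ℝ,
      HasSum (fun s : ℕ => (-1 : ℝ) ^ s • (Ω₀⁻¹ * Δ) ^ s) J ∧
      (Ω₀ + Δ)⁻¹ - Ω₀⁻¹ + Ω₀⁻¹ * Δ * Ω₀⁻¹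
        = Ω₀⁻¹ * Δ * Ω₀⁻¹ * Δ * J * Ω₀⁻¹ ∧
      blockMax ((Ω₀ + Δ)⁻¹ - Ω₀⁻¹ + Ω₀⁻¹ * Δ * Ω₀⁻¹)
        ≤ 3 / 2 * blockInfty Ω₀⁻¹ ^ 3 * (d : ℝ) * blockMax Δ ^ 2 := by
  set C := blockInfty Ω₀⁻¹
  set ε := blockMax Δ
  have hC : 0 ≤ C := blockInfty_nonneg _
  have hε : 0 ≤ ε := blockMax_nonneg Δ
  have hr : C * (d * ε) < 1 / 3 := mul_mul_lt_one_third hε hsmall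
  have hΩsymm : (Ω₀⁻¹).IsSymm := Matrix.isHermitian_iff_isSymm.mp hΩ₀.isHermitian.inv
  have hXone := blockOne_mul_le_of_sparse hΩsymm hΔs hΔd
  obtain ⟨J, hJsum, hJ⟩ := exists_hasSum_neg_pow_one_add_mul_eq_one
    ((blockInfty_mul_le_of_sparse Ω₀⁻¹ hΔd).trans_lt (by linarith))
  have hdet : IsUnit Ω₀.det := isUnit_iff_ne_zero.mpr hΩ₀.det_pos.ne'
  have hR := inv_add_sub_inv_add_inv_mul_mul_inv hdet hJ
  have hG : blockOne (J * Ω₀⁻¹) ≤ 3 / 2 * C := by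
    refine (blockOne_le_of_one_add_mul_eq (by rw [← mul_assoc, hJ, one_mul]) hXone
      (by linarith)).trans ?_
    rw [blockOne_eq_blockInfty_of_isSymm hΩsymm, div_le_iff₀ (by linarith)]
    nlinarith
  refine ⟨(Matrix.isUnit_iff_isUnit_det _).mpr
      (Matrix.isUnit_det_of_right_inverse (add_mul_mul_inv_eq_one hdet hJ)), J,
    by simpa only [← smul_pow, neg_one_smul] using hJsum, hR, ?_⟩
  calc blockMax ((Ω₀ + Δ)⁻¹ - Ω₀⁻¹ + Ω₀⁻¹ * Δ * Ω₀⁻¹)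
      = blockMax (Ω₀⁻¹ * Δ * (Ω₀⁻¹ * Δ * (J * Ω₀⁻¹))) := by rw [hR]; simp only [mul_assoc]
    _ ≤ blockMax (Ω₀⁻¹ * Δ) * (blockOne (Ω₀⁻¹ * Δ) * blockOne (J * Ω₀⁻¹)) :=
        blockMax_mul_mul_le _ _ _
    _ ≤ (C * ε) * (C * (d * ε) * (3 / 2 * C)) :=
        mul_le_mul (blockMax_mul_le_blockInfty_mul _ _)
          (mul_le_mul hXone hG (blockOne_nonneg _) (by positivity))
          (mul_nonneg (blockOne_nonneg _) (blockOne_nonneg _)) (by positivity)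
    _ = 3 / 2 * C ^ 3 * d * ε ^ 2 := by ring

/-- Lemma 6, remainder part: under the block-sparsity and
smallness conditions on `Δ`, `Ω₀ + Δ` is invertible, the remainder
`R(Δ) = (Ω₀+Δ)⁻¹ − Ω₀⁻¹ + Ω₀⁻¹ Δ Ω₀⁻¹` equals `Ω₀⁻¹ Δ Ω₀⁻¹ Δ J Ω₀⁻¹` with
`J = Σ_s (−1)^s (Ω₀⁻¹Δ)^s`, and
`‖R(Δ)‖_max^(M) ≤ (3/2) C_Σ³ d (‖Δ‖_max^(M))²`. -/
theorem statement_18 {p M : ℕ} (hp : 1 ≤ p) (hM : 1 ≤ M)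
    (Ω₀ : Matrix (Fin p × Fin M) (Fin p × Fin M) ℝ) (hΩ₀ : Ω₀.PosDef)
    (d : ℕ) (hd : 1 ≤ d)
    (Δ : Matrix (Fin p × Fin M) (Fin p × Fin M) ℝ) (hΔs : Δ.IsSymm)
    (hΔd : ∀ j : Fin p, {l : Fin p | blk Δ j l ≠ 0}.ncard ≤ d)
    (hsmall : blockMax Δ < 1 / (3 * blockInfty Ω₀⁻¹ * d)) :
    IsUnit (Ω₀ + Δ) ∧
    ∃ J : Matrix (Fin p × Fin M) (Fin p × Fin M) ℝ,
      HasSum (fun s : ℕ => (-1 : ℝ) ^ s • (Ω₀⁻¹ * Δ) ^ s) J ∧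
      (Ω₀ + Δ)⁻¹ - Ω₀⁻¹ + Ω₀⁻¹ * Δ * Ω₀⁻¹
        = Ω₀⁻¹ * Δ * Ω₀⁻¹ * Δ * J * Ω₀⁻¹ ∧
      blockMax ((Ω₀ + Δ)⁻¹ - Ω₀⁻¹ + Ω₀⁻¹ * Δ * Ω₀⁻¹)
        ≤ 3 / 2 * blockInfty Ω₀⁻¹ ^ 3 * (d : ℝ) * blockMax Δ ^ 2 :=
  statement_18_general Ω₀ hΩ₀ d Δ hΔs hΔd hsmall

end JF
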